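/- Let Z_1 and Z_2 be independent ℝ^d-valued random vectors whose laws satisfy weak Poincaré inequalities with nonincreasing rate functions β_{Z_1} and β_{Z_2} respectively. Then the law of Z_1 + Z_2 satisfies a weak Poincaré inequality with rate function s ↦ β_{Z_1}(s/2) + β_{Z_2}(s/2); that is, for every s > 0 and every bounded Lipschitz f : ℝ^d → ℝ, Var(f(Z_1+Z_2)) ≤ (β_{Z_1}(s/2) + β_{Z_2}(s/2)) · E[|∇f(Z_1+Z_2)|²] + s·Osc(f)². -/

import Mathlib

open MeasureTheory Real Filter Set
open scoped ENNReal RealInnerProductSpace BigOperators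

noncomputable section

/-- Euclidean space `ℝ^d`. -/
abbrev Euc (d : ℕ) := EuclideanSpace ℝ (Fin d)

/-- The variance of `f` under `μ` : `∫ f² dμ − (∫ f dμ)²`. -/
def var {E : Type*} [MeasurableSpace E] (μ : Measure E) (f : E → ℝ) : ℝ :=
  (∫ x, (f x) ^ 2 ∂μ) - (∫ x, f x ∂μ) ^ 2

/-- The oscillation `sup f − inf f` of a function. -/
def osc {E : Type*} (f : E → ℝ) : ℝ := sSup (Set.range f) - sInf (Set.range f)

/-- The oscillation of `f` on a set `s` : `sup_s f − inf_s f`. -/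
def oscOn {E : Type*} (f : E → ℝ) (s : Set E) : ℝ := sSup (f '' s) - sInf (f '' s)

/-- Bounded Lipschitz real valued functions. -/
def BddLip {E : Type*} [PseudoEMetricSpace E] (f : E → ℝ) : Prop :=
  (∃ K, LipschitzWith K f) ∧ (∃ M, ∀ x, |f x| ≤ M)

/-- `μ` satisfies a weak Poincaré inequality with rate function `β`:
for all `s > 0` and all bounded Lipschitz `f`,
`Var_μ(f) ≤ β(s) ∫ |∇f|² dμ + s · Osc(f)²`. -/
def WeakPoincare {E : Type*} [NormedAddCommGroup E] [NormedSpace ℝ E] [MeasurableSpace E]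
    (μ : Measure E) (β : ℝ → ℝ) : Prop :=
  ∀ s : ℝ, 0 < s → ∀ f : E → ℝ, BddLip f →
    var μ f ≤ β s * (∫ x, ‖fderiv ℝ f x‖ ^ 2 ∂μ) + s * (osc f) ^ 2

/-- `μ` satisfies a weighted Poincaré inequality with weight `ω` and constant `C`:
`Var_μ(f) ≤ C ∫ |∇f|² ω² dμ` for all bounded Lipschitz `f`. -/
def WeightedPoincare {E : Type*} [NormedAddCommGroup E] [NormedSpace ℝ E] [MeasurableSpace E]
    (μ : Measure E) (ω : E → ℝ) (C : ℝ) : Prop :=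
  ∀ f : E → ℝ, BddLip f →
    var μ f ≤ C * (∫ x, ‖fderiv ℝ f x‖ ^ 2 * (ω x) ^ 2 ∂μ)

/-- The entropy `Ent_μ(f²) = ∫ f² ln(f²/∫f²dμ) dμ`. -/
def entSq {E : Type*} [MeasurableSpace E] (μ : Measure E) (f : E → ℝ) : ℝ :=
  ∫ x, (f x) ^ 2 * Real.log ((f x) ^ 2 / ∫ y, (f y) ^ 2 ∂μ) ∂μ

/-- `μ` satisfies a weak logarithmic Sobolev inequality with rate function `β`. -/
def WeakLogSobolev {E : Type*} [NormedAddCommGroup E] [NormedSpace ℝ E] [MeasurableSpace E]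
    (μ : Measure E) (β : ℝ → ℝ) : Prop :=
  ∀ s : ℝ, 0 < s → ∀ f : E → ℝ, BddLip f →
    entSq μ f ≤ β s * (∫ x, ‖fderiv ℝ f x‖ ^ 2 ∂μ) + s * (osc f) ^ 2

/-- `μ` satisfies a weighted logarithmic Sobolev inequality with weight `ω`, constant `C`. -/
def WeightedLogSobolev {E : Type*} [NormedAddCommGroup E] [NormedSpace ℝ E] [MeasurableSpace E]
    (μ : Measure E) (ω : E → ℝ) (C : ℝ) : Prop :=
  ∀ f : E → ℝ, BddLip f →
    entSq μ f ≤ C * (∫ x, ‖fderiv ℝ f x‖ ^ 2 * (ω x) ^ 2 ∂μ)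

/-- The Laplacian on Euclidean space: sum of second partial derivatives. -/
def lap {d : ℕ} (f : Euc d → ℝ) (x : Euc d) : ℝ :=
  ∑ i : Fin d, iteratedFDeriv ℝ 2 f x ![EuclideanSpace.single i 1, EuclideanSpace.single i 1]

/-- The operator `L_V f = Δf − ⟨∇V, ∇f⟩`. -/
def LV {d : ℕ} (V f : Euc d → ℝ) (x : Euc d) : ℝ :=
  lap f x - ⟪gradient V x, gradient f x⟫

/-- The weighted generator `L^ω_V g = ω² Δg + ⟨∇ω² − ω² ∇V, ∇g⟩`. -/
def Lw {d : ℕ} (ω V f : Euc d → ℝ) (x : Euc d) : ℝ :=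
  (ω x) ^ 2 * lap f x +
    ⟪gradient (fun y => (ω y) ^ 2) x - (ω x) ^ 2 • gradient V x, gradient f x⟫

/-- The `L²(μ)`-capacity of a set `A`:
`inf { ∫ |∇φ|² dμ : φ Lipschitz with compact support, 1_A ≤ φ ≤ 1 }`. -/
def cap {E : Type*} [NormedAddCommGroup E] [NormedSpace ℝ E] [MeasurableSpace E]
    (μ : Measure E) (A : Set E) : ℝ :=
  sInf ((fun φ : E → ℝ => ∫ x, ‖fderiv ℝ φ x‖ ^ 2 ∂μ) ''
    {φ | (∃ K, LipschitzWith K φ) ∧ HasCompactSupport φ ∧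
      (∀ x, A.indicator 1 x ≤ φ x) ∧ (∀ x, φ x ≤ 1)})


/-!
Write `F (x, y) = f (x + y)` on the product of the two laws. By the Efron–Stein inequality,
`Var F` is at most the `μ₂`-average of the `μ₁`-variances of the slices `x ↦ f (x + y)` plus the
`μ₁`-average of the `μ₂`-variances of the slices `y ↦ f (x + y)`. Every slice is a translate of
`f`: it has the same oscillation, and its derivative is that of `f` at the shifted point. So the
weak Poincaré inequalities at level `s / 2`, averaged over the other variable, bound the two
terms by `βᵢ (s / 2) ∫ ‖∇f‖² d(μ₁ ∗ μ₂) + (s / 2) (osc f)²`.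
-/

open ProbabilityTheory

section Variance

variable {α : Type*} [MeasurableSpace α] {μ : Measure α} {u : α → ℝ}

lemma memLp_two_of_abs_le [IsFiniteMeasure μ] (hu : Measurable u) {M : ℝ}
    (hM : ∀ x, |u x| ≤ M) : MemLp u 2 μ :=
  .of_bound hu.aestronglyMeasurable M (ae_of_all _ fun x => Real.norm_eq_abs (u x) ▸ hM x)

lemma integrable_of_abs_le [IsFiniteMeasure μ] (hu : Measurable u) {M : ℝ}
    (hM : ∀ x, |u x| ≤ M) : Integrable u μ :=
  (memLp_two_of_abs_le hu hM).integrable one_le_two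

variable [IsProbabilityMeasure μ]

lemma abs_integral_le_of_abs_le {M : ℝ} (hM : ∀ x, |u x| ≤ M) : |∫ x, u x ∂μ| ≤ M := by
  have h := norm_integral_le_of_norm_le_const (μ := μ)
    (ae_of_all _ fun x => Real.norm_eq_abs (u x) ▸ hM x)
  rwa [probReal_univ, mul_one, Real.norm_eq_abs] at h

lemma var_eq_integral_sub_sq (hu : MemLp u 2 μ) :
    var μ u = ∫ x, (u x - ∫ y, u y ∂μ) ^ 2 ∂μ := by
  rw [var, ← variance_eq_integral hu.aemeasurable, variance_eq_sub hu]
  rfl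

lemma sq_integral_le_integral_sq (hu : MemLp u 2 μ) :
    (∫ x, u x ∂μ) ^ 2 ≤ ∫ x, u x ^ 2 ∂μ := by
  have h := variance_nonneg u μ
  rw [variance_eq_sub hu] at h
  exact sub_nonneg.1 h

end Variance

section EfronStein

variable {α β : Type*} [MeasurableSpace α] [MeasurableSpace β] {μ : Measure α} {ν : Measure β}
  [IsProbabilityMeasure μ] [IsProbabilityMeasure ν] {F : α × β → ℝ} {M : ℝ}

lemma memLp_two_integral_prod_left (hF : Measurable F) (hM : ∀ p, |F p| ≤ M) :
    MemLp (fun y => ∫ x, F (x, y) ∂μ) 2 ν :=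
  memLp_two_of_abs_le hF.stronglyMeasurable.integral_prod_left'.measurable
    fun _ => abs_integral_le_of_abs_le fun _ => hM _

lemma integral_var_slice_eq (hF : Measurable F) (hM : ∀ p, |F p| ≤ M) :
    ∫ y, var μ (fun x => F (x, y)) ∂ν =
      ∫ y, ∫ x, F (x, y) ^ 2 ∂μ ∂ν - ∫ y, (∫ x, F (x, y) ∂μ) ^ 2 ∂ν :=
  integral_sub (memLp_two_of_abs_le hF hM).integrable_sq.integral_prod_right
    (memLp_two_integral_prod_left hF hM).integrable_sq

lemma integrable_var_slice (hF : Measurable F) (hM : ∀ p, |F p| ≤ M) :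
    Integrable (fun y => var μ (fun x => F (x, y))) ν :=
  (memLp_two_of_abs_le hF hM).integrable_sq.integral_prod_right.sub
    (memLp_two_integral_prod_left hF hM).integrable_sq

lemma var_prod_eq (hF : Measurable F) (hM : ∀ p, |F p| ≤ M) :
    var (μ.prod ν) F =
      ∫ y, var μ (fun x => F (x, y)) ∂ν + var ν (fun y => ∫ x, F (x, y) ∂μ) := by
  rw [var, var, integral_prod_symm _ (memLp_two_of_abs_le hF hM).integrable_sq,
    integral_prod_symm _ (integrable_of_abs_le hF hM), integral_var_slice_eq hF hM]
  ring

lemma var_integral_le_integral_var (hF : Measurable F) (hM : ∀ p, |F p| ≤ M) :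
    var ν (fun y => ∫ x, F (x, y) ∂μ) ≤ ∫ x, var ν (fun y => F (x, y)) ∂μ := by
  set m : α → ℝ := fun x => ∫ y, F (x, y) ∂ν
  have hm : Measurable m := hF.stronglyMeasurable.integral_prod_right'.measurable
  have hmM : ∀ x, |m x| ≤ M := fun x => abs_integral_le_of_abs_le fun _ => hM _
  set H : α × β → ℝ := fun p => F p - m p.1
  have hH : Measurable H := hF.sub (hm.comp measurable_fst)
  have hHM : ∀ p, |H p| ≤ M + M := fun p => (abs_sub _ _).trans (add_le_add (hM p) (hmM p.1))
  have hH2 := (memLp_two_of_abs_le (μ := μ.prod ν) hH hHM).integrable_sq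
  have hg := memLp_two_integral_prod_left (μ := μ) (ν := ν) hF hM
  have hmean : ∫ y, (∫ x, F (x, y) ∂μ) ∂ν = ∫ x, m x ∂μ :=
    (integral_integral_swap (f := fun x y => F (x, y)) (integrable_of_abs_le hF hM)).symm
  have hpoint : ∀ y, (∫ x, F (x, y) ∂μ - ∫ x, m x ∂μ) ^ 2 ≤ ∫ x, H (x, y) ^ 2 ∂μ := fun y => by
    have hslice : Integrable (fun x => F (x, y)) μ :=
      integrable_of_abs_le (hF.comp measurable_prodMk_right) fun _ => hM _
    have hHslice : MemLp (fun x => H (x, y)) 2 μ :=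
      memLp_two_of_abs_le (hH.comp measurable_prodMk_right) fun _ => hHM _
    rw [← integral_sub hslice (integrable_of_abs_le hm hmM)]
    exact sq_integral_le_integral_sq hHslice
  calc var ν (fun y => ∫ x, F (x, y) ∂μ)
      = ∫ y, (∫ x, F (x, y) ∂μ - ∫ x, m x ∂μ) ^ 2 ∂ν := by
        rw [var_eq_integral_sub_sq hg, hmean]
    _ ≤ ∫ y, ∫ x, H (x, y) ^ 2 ∂μ ∂ν :=
        integral_mono (hg.sub (memLp_const _)).integrable_sq hH2.integral_prod_right hpoint
    _ = ∫ x, ∫ y, H (x, y) ^ 2 ∂ν ∂μ := (integral_integral_swap hH2).symm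
    _ = ∫ x, var ν (fun y => F (x, y)) ∂μ := by
        congr 1 with x
        have hslice : MemLp (fun y => F (x, y)) 2 ν :=
          memLp_two_of_abs_le (hF.comp measurable_prodMk_left) fun _ => hM _
        rw [var_eq_integral_sub_sq hslice]

-- The Efron–Stein inequality for two independent coordinates.
theorem var_prod_le (hF : Measurable F) (hM : ∀ p, |F p| ≤ M) :
    var (μ.prod ν) F ≤
      ∫ y, var μ (fun x => F (x, y)) ∂ν + ∫ x, var ν (fun y => F (x, y)) ∂μ := by
  rw [var_prod_eq hF hM]
  gcongr
  exact var_integral_le_integral_var hF hM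

end EfronStein

lemma osc_comp_of_surjective {α β : Type*} {φ : α → β} (hφ : Function.Surjective φ)
    (f : β → ℝ) : osc (f ∘ φ) = osc f := by
  rw [osc, osc, hφ.range_comp]

section Translation

variable {E : Type*} [NormedAddCommGroup E] {f : E → ℝ}

lemma BddLip.continuous (hf : BddLip f) : Continuous f :=
  hf.1.choose_spec.continuous

lemma BddLip.comp_add_right (hf : BddLip f) (a : E) : BddLip (fun x => f (x + a)) := by
  obtain ⟨⟨K, hK⟩, M, hM⟩ := hf
  exact ⟨⟨K, mul_one K ▸ hK.comp (isometry_add_right a).lipschitz⟩, M, fun _ => hM _⟩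

variable [NormedSpace ℝ E] [MeasurableSpace E] {μ : Measure E} {β : ℝ → ℝ} {s : ℝ}

theorem WeakPoincare.var_comp_add_right_le (h : WeakPoincare μ β) (hs : 0 < s) (hf : BddLip f)
    (a : E) :
    var μ (fun x => f (x + a)) ≤ β s * ∫ x, ‖fderiv ℝ f (x + a)‖ ^ 2 ∂μ + s * osc f ^ 2 := by
  have h' := h s hs _ (hf.comp_add_right a)
  rw [← Function.comp_def f, osc_comp_of_surjective (add_right_surjective a)] at h'
  simpa only [Function.comp_def, fderiv_comp_add_right] using h'

end Translation

section Convolution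

variable {E : Type*} [NormedAddCommGroup E] [MeasurableSpace E] [MeasurableAdd₂ E]
  {μ ν : Measure E}

lemma integral_conv_eq_integral_prod {g : E → ℝ} (hg : AEStronglyMeasurable g (μ ∗ ν)) :
    ∫ z, g z ∂(μ ∗ ν) = ∫ p, g (p.1 + p.2) ∂(μ.prod ν) :=
  integral_map measurable_add.aemeasurable hg

lemma var_conv_eq_var_prod {f : E → ℝ} (hf : Measurable f) :
    var (μ ∗ ν) f = var (μ.prod ν) (fun p => f (p.1 + p.2)) := by
  rw [var, var, integral_conv_eq_integral_prod hf.aestronglyMeasurable,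
    integral_conv_eq_integral_prod (hf.pow_const 2).aestronglyMeasurable]

variable [NormedSpace ℝ E] [OpensMeasurableSpace E] [IsProbabilityMeasure μ]
  [IsProbabilityMeasure ν] {f : E → ℝ} {β : ℝ → ℝ} {s : ℝ}

theorem WeakPoincare.integral_var_comp_add_le (h : WeakPoincare μ β) (hs : 0 < s)
    (hf : BddLip f) :
    ∫ y, var μ (fun x => f (x + y)) ∂ν ≤
      β s * ∫ z, ‖fderiv ℝ f z‖ ^ 2 ∂(μ ∗ ν) + s * osc f ^ 2 := by
  obtain ⟨⟨K, hK⟩, M, hM⟩ := hf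
  have hD : Measurable fun z => ‖fderiv ℝ f z‖ ^ 2 := (measurable_fderiv ℝ f).norm.pow_const 2
  have hDint : Integrable (fun p : E × E => ‖fderiv ℝ f (p.1 + p.2)‖ ^ 2) (μ.prod ν) :=
    integrable_of_abs_le (hD.comp measurable_add) (M := K ^ 2) fun p => by
      rw [abs_pow, abs_norm]
      gcongr
      exact norm_fderiv_le_of_lipschitz ℝ hK
  calc ∫ y, var μ (fun x => f (x + y)) ∂ν
      ≤ ∫ y, (β s * ∫ x, ‖fderiv ℝ f (x + y)‖ ^ 2 ∂μ + s * osc f ^ 2) ∂ν :=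
        integral_mono (integrable_var_slice (hK.continuous.measurable.comp measurable_add)
            fun _ => hM _)
          ((hDint.integral_prod_right.const_mul _).add (integrable_const _))
          fun y => h.var_comp_add_right_le hs ⟨⟨K, hK⟩, M, hM⟩ y
    _ = β s * ∫ z, ‖fderiv ℝ f z‖ ^ 2 ∂(μ ∗ ν) + s * osc f ^ 2 := by
        rw [integral_add (hDint.integral_prod_right.const_mul _) (integrable_const _),
          integral_const_mul, ← integral_prod_symm _ hDint,
          ← integral_conv_eq_integral_prod hD.aestronglyMeasurable]
        simp

end Convolution

theorem WeakPoincare.conv {E : Type*} [NormedAddCommGroup E] [NormedSpace ℝ E]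
    [MeasurableSpace E] [OpensMeasurableSpace E] [MeasurableAdd₂ E] {μ₁ μ₂ : Measure E}
    [IsProbabilityMeasure μ₁] [IsProbabilityMeasure μ₂] {β₁ β₂ : ℝ → ℝ}
    (h₁ : WeakPoincare μ₁ β₁) (h₂ : WeakPoincare μ₂ β₂) :
    WeakPoincare (μ₁ ∗ μ₂) fun s => β₁ (s / 2) + β₂ (s / 2) := by
  intro s hs f hf
  obtain ⟨M, hM⟩ := hf.2
  have hs2 : 0 < s / 2 := half_pos hs
  have bound₁ := h₁.integral_var_comp_add_le (ν := μ₂) hs2 hf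
  have bound₂ := h₂.integral_var_comp_add_le (ν := μ₁) hs2 hf
  rw [Measure.conv_comm μ₂ μ₁] at bound₂
  calc var (μ₁ ∗ μ₂) f = var (μ₁.prod μ₂) fun p => f (p.1 + p.2) :=
        var_conv_eq_var_prod hf.continuous.measurable
    _ ≤ ∫ y, var μ₁ (fun x => f (x + y)) ∂μ₂ + ∫ x, var μ₂ (fun y => f (x + y)) ∂μ₁ :=
        var_prod_le (hf.continuous.measurable.comp measurable_add) fun _ => hM _
    _ = ∫ y, var μ₁ (fun x => f (x + y)) ∂μ₂ + ∫ x, var μ₂ (fun y => f (y + x)) ∂μ₁ := by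
        congr 1
        simp_rw [add_comm]
    _ ≤ _ := add_le_add bound₁ bound₂
    _ = _ := by ring

theorem stmt_1_general (d : ℕ) (μ₁ μ₂ : Measure (Euc d))
    (hprob₁ : IsProbabilityMeasure μ₁) (hprob₂ : IsProbabilityMeasure μ₂)
    (β₁ β₂ : ℝ → ℝ)
    (h₁ : WeakPoincare μ₁ β₁) (h₂ : WeakPoincare μ₂ β₂) :
    WeakPoincare
      (Measure.map (fun p : Euc d × Euc d => p.1 + p.2) (μ₁.prod μ₂))
      (fun s => β₁ (s / 2) + β₂ (s / 2)) :=
  -- `μ₁ ∗ μ₂` unfolds to this pushforward of the product measure.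
  h₁.conv h₂

/-- the law of the sum of two independent random vectors whose laws
satisfy weak Poincaré inequalities satisfies a weak Poincaré inequality with rate
`s ↦ β₁(s/2) + β₂(s/2)`. -/
theorem stmt_1 (d : ℕ) (μ₁ μ₂ : Measure (Euc d))
    (hprob₁ : IsProbabilityMeasure μ₁) (hprob₂ : IsProbabilityMeasure μ₂)
    (β₁ β₂ : ℝ → ℝ)
    (hβ₁nonneg : ∀ s, 0 ≤ β₁ s) (hβ₂nonneg : ∀ s, 0 ≤ β₂ s)
    (hβ₁mono : Antitone β₁) (hβ₂mono : Antitone β₂)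
    (h₁ : WeakPoincare μ₁ β₁) (h₂ : WeakPoincare μ₂ β₂) :
    WeakPoincare
      (Measure.map (fun p : Euc d × Euc d => p.1 + p.2) (μ₁.prod μ₂))
      (fun s => β₁ (s / 2) + β₂ (s / 2)) :=
  stmt_1_general d μ₁ μ₂ hprob₁ hprob₂ β₁ β₂ h₁ h₂
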